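/- If τ > 1 and {I_α}_{α∈A} is a finite family of bounded intervals on ℝ, then |⋃_α τI_α| ≤ τ · |⋃_α I_α|. -/

import Mathlib

open MeasureTheory

/-- `dilate τ a b` is the interval with the same center as `[a,b]` and `τ` times its length. -/
def dilate (τ a b : ℝ) : Set ℝ :=
  Set.Icc ((a + b) / 2 - τ * (b - a) / 2) ((a + b) / 2 + τ * (b - a) / 2)

/-!
Merge any two overlapping intervals of the family into their union. This keeps `⋃ I_α`, only
enlarges `⋃ τI_α` (dilation by `τ ≥ 1` is monotone under inclusion), and strictly decreases the
number of intervals. When no two intervals overlap, `|⋃ τI_α| ≤ ∑ |τI_α| = τ ∑ |I_α| = τ |⋃ I_α|`.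
-/

open Set

theorem dilate_subset_dilate {τ a b c d : ℝ} (hτ : 1 ≤ τ) (hca : c ≤ a) (hbd : b ≤ d) :
    dilate τ a b ⊆ dilate τ c d :=
  Icc_subset_Icc (by nlinarith) (by nlinarith)

theorem volume_dilate {τ : ℝ} (hτ : 0 ≤ τ) (a b : ℝ) :
    volume (dilate τ a b) = ENNReal.ofReal τ * volume (Icc a b) := by
  rw [dilate, Real.volume_Icc, Real.volume_Icc, ← ENNReal.ofReal_mul hτ]
  ring_nf

theorem volume_biUnion_dilate_le_of_pairwiseDisjoint {τ : ℝ} (hτ : 0 ≤ τ) {s : Finset (ℝ × ℝ)}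
    (hs : (s : Set (ℝ × ℝ)).PairwiseDisjoint fun p => Icc p.1 p.2) :
    volume (⋃ p ∈ s, dilate τ p.1 p.2) ≤ ENNReal.ofReal τ * volume (⋃ p ∈ s, Icc p.1 p.2) :=
  calc volume (⋃ p ∈ s, dilate τ p.1 p.2)
      ≤ ∑ p ∈ s, volume (dilate τ p.1 p.2) := measure_biUnion_finset_le _ _
    _ = ENNReal.ofReal τ * ∑ p ∈ s, volume (Icc p.1 p.2) := by
      simp only [volume_dilate hτ, Finset.mul_sum]
    _ = ENNReal.ofReal τ * volume (⋃ p ∈ s, Icc p.1 p.2) := by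
      rw [measure_biUnion_finset hs fun _ _ => measurableSet_Icc]

section Merge

variable {p q : ℝ × ℝ} (t : Finset (ℝ × ℝ))

theorem biUnion_Icc_insert_insert_eq_of_mem {x : ℝ} (hxp : x ∈ Icc p.1 p.2)
    (hxq : x ∈ Icc q.1 q.2) :
    ⋃ r ∈ insert p (insert q t), Icc r.1 r.2 =
      ⋃ r ∈ insert (min p.1 q.1, max p.2 q.2) t, Icc r.1 r.2 := by
  simp only [Finset.set_biUnion_insert, ← union_assoc,
    Icc_union_Icc' (hxq.1.trans hxp.2) (hxp.1.trans hxq.2)]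

theorem biUnion_dilate_insert_insert_subset {τ : ℝ} (hτ : 1 ≤ τ) :
    ⋃ r ∈ insert p (insert q t), dilate τ r.1 r.2 ⊆
      ⋃ r ∈ insert (min p.1 q.1, max p.2 q.2) t, dilate τ r.1 r.2 := by
  simp only [Finset.set_biUnion_insert, ← union_assoc]
  exact union_subset_union_left _ <| union_subset
    (dilate_subset_dilate hτ (min_le_left _ _) (le_max_left _ _))
    (dilate_subset_dilate hτ (min_le_right _ _) (le_max_right _ _))

end Merge

theorem volume_biUnion_dilate_le {τ : ℝ} (hτ : 1 ≤ τ) (s : Finset (ℝ × ℝ)) :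
    volume (⋃ p ∈ s, dilate τ p.1 p.2) ≤ ENNReal.ofReal τ * volume (⋃ p ∈ s, Icc p.1 p.2) := by
  classical
  by_cases hs : (s : Set (ℝ × ℝ)).PairwiseDisjoint fun p => Icc p.1 p.2
  · exact volume_biUnion_dilate_le_of_pairwiseDisjoint (by linarith) hs
  obtain ⟨p, hp, q, hq, hpq, x, hxp, hxq⟩ :
      ∃ p ∈ s, ∃ q ∈ s, p ≠ q ∧ (Icc p.1 p.2 ∩ Icc q.1 q.2).Nonempty := by
    simpa [Set.PairwiseDisjoint, Set.Pairwise, Set.not_disjoint_iff_nonempty_inter] using hs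
  set t := (s.erase p).erase q
  have hs_eq : s = insert p (insert q t) := by
    rw [Finset.insert_erase (Finset.mem_erase.2 ⟨hpq.symm, hq⟩), Finset.insert_erase hp]
  have hcard : (insert (min p.1 q.1, max p.2 q.2) t).card < s.card := by
    have hpt : p ∉ insert q t := by simp [t, hpq]
    have hqt : q ∉ t := by simp [t]
    rw [hs_eq, Finset.card_insert_of_notMem hpt, Finset.card_insert_of_notMem hqt]
    exact Nat.lt_succ_of_le (Finset.card_insert_le _ t)
  rw [hs_eq]
  calc volume (⋃ r ∈ insert p (insert q t), dilate τ r.1 r.2)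
      ≤ volume (⋃ r ∈ insert (min p.1 q.1, max p.2 q.2) t, dilate τ r.1 r.2) :=
        measure_mono (biUnion_dilate_insert_insert_subset t hτ)
    _ ≤ ENNReal.ofReal τ * volume (⋃ r ∈ insert (min p.1 q.1, max p.2 q.2) t, Icc r.1 r.2) :=
        volume_biUnion_dilate_le hτ _
    _ = ENNReal.ofReal τ * volume (⋃ r ∈ insert p (insert q t), Icc r.1 r.2) := by
        rw [biUnion_Icc_insert_insert_eq_of_mem t hxp hxq]
termination_by s.card

theorem stmt_2_general {ι : Type} (A : Finset ι) (a b : ι → ℝ)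
    (τ : ℝ) (hτ : 1 < τ) :
    volume (⋃ α ∈ A, dilate τ (a α) (b α)) ≤
      ENNReal.ofReal τ * volume (⋃ α ∈ A, Set.Icc (a α) (b α)) := by
  classical
  simpa only [Finset.set_biUnion_finset_image] using
    volume_biUnion_dilate_le hτ.le (A.image fun α => (a α, b α))

/-- If `τ > 1` then `|⋃ τI_α| ≤ τ ⋅ |⋃ I_α|` for any finite family of bounded intervals. -/
theorem stmt_2 {ι : Type} (A : Finset ι) (a b : ι → ℝ) (hab : ∀ α ∈ A, a α ≤ b α)
    (τ : ℝ) (hτ : 1 < τ) :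
    volume (⋃ α ∈ A, dilate τ (a α) (b α)) ≤
      ENNReal.ofReal τ * volume (⋃ α ∈ A, Set.Icc (a α) (b α)) :=
  stmt_2_general A a b τ hτ
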